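/- Let f = x·y ∈ ℂ[[x,y]] (an ordinary double point) and O = ℂ[[x,y]]/(xy). Then M(f) = {(a,b) ∈ O² : a·x̄ = b·ȳ} equals the submodule ȳ·O ⊕ x̄·O of O², it is isomorphic as an O-module to the integral closure Õ of O in its total ring of fractions, and M(f)/ι(O) has ℂ-dimension 1, where ι(c) = (c·ȳ, c·x̄). (This is the local content of the example: for a plane curve X with only ordinary double points, ω_X^0 ≅ Õ_X.) -/

import Mathlib

set_option synthInstance.maxHeartbeats 1000000
set_option maxHeartbeats 1000000

/-- The local ring `O = ℂ[[x,y]]/(xy)` of the nodal plane curve germ. -/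
abbrev nodeRing : Type :=
  MvPowerSeries (Fin 2) ℂ ⧸
    Ideal.span {(MvPowerSeries.X 0 * MvPowerSeries.X 1 : MvPowerSeries (Fin 2) ℂ)}

/-- The image `x̄` of `x` in `O = ℂ[[x,y]]/(xy)`. -/
noncomputable def xbar : nodeRing := Ideal.Quotient.mk _ (MvPowerSeries.X 0)

/-- The image `ȳ` of `y` in `O = ℂ[[x,y]]/(xy)`. -/
noncomputable def ybar : nodeRing := Ideal.Quotient.mk _ (MvPowerSeries.X 1)

/-- `M(xy) = {(a,b) ∈ O² : a·x̄ = b·ȳ}` (here `f_x = y`, `f_y = x`, so the Barlet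
condition `a·η = b·ξ` reads `a·x̄ = b·ȳ`), as an `O`-submodule of `O²`. -/
noncomputable def nodeBarletModule : Submodule nodeRing (nodeRing × nodeRing) :=
  LinearMap.ker
    (xbar • LinearMap.fst nodeRing nodeRing nodeRing
      - ybar • LinearMap.snd nodeRing nodeRing nodeRing)

/-- The natural map `ι : O → O²`, `ι(c) = (c·ȳ, c·x̄) = (c·f̄_x, c·f̄_y)`, as a
`ℂ`-linear map. -/
noncomputable def nodeIota : nodeRing →ₗ[ℂ] nodeRing × nodeRing :=
  LinearMap.prod (LinearMap.mulRight ℂ ybar) (LinearMap.mulRight ℂ xbar)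

/-!
Restricting to the two branches `y = 0` and `x = 0` embeds `O` into `ℂ⟦t⟧ × ℂ⟦t⟧`, with image
the pairs with equal constant terms and `x̄ ↦ (t, 0)`, `ȳ ↦ (0, t)`. So `a x̄ = b ȳ` says exactly
that `a` vanishes on the `x`-branch and `b` on the `y`-branch, i.e. `a ∈ ȳO` and `b ∈ x̄O`.
Dividing by `x̄ + ȳ ↦ (t, t)` then identifies `M` with `ℂ⟦t⟧ × ℂ⟦t⟧` inside the total ring of
fractions `ℂ((t)) × ℂ((t))`, and this is `Õ`. Writing `(a, b) ∈ M` as `a ↦ (0, t q)` and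
`b ↦ (t p, 0)`, the image `ι(O)` is cut out by `p(0) = q(0)`, so `M / ι(O) ≅ ℂ`.
-/

namespace MvPowerSeries

open Function

variable {R : Type*} [CommRing R]

noncomputable def restrictToAxis (i : Fin 2) : MvPowerSeries (Fin 2) R →ₐ[R] PowerSeries R :=
  killCompl (Embedding.punit i)

lemma coeff_restrictToAxis (i : Fin 2) (f : MvPowerSeries (Fin 2) R) (n : ℕ) :
    PowerSeries.coeff n (restrictToAxis i f) = coeff (Finsupp.single i n) f := by
  rw [restrictToAxis, PowerSeries.coeff, coeff_killCompl, Finsupp.embDomain_single]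
  rfl

@[simp]
lemma restrictToAxis_X_self (i : Fin 2) :
    restrictToAxis i (X i : MvPowerSeries (Fin 2) R) = PowerSeries.X :=
  killCompl_X (e := Embedding.punit i) ()

lemma restrictToAxis_X_of_ne {i j : Fin 2} (hij : i ≠ j) :
    restrictToAxis i (X j : MvPowerSeries (Fin 2) R) = 0 :=
  killCompl_X_eq_zero (by rintro ⟨_, h⟩; exact hij h)

lemma restrictToAxis_rename (i : Fin 2) (r : PowerSeries R) :
    restrictToAxis i (rename (Embedding.punit i) r) = r :=
  killCompl_rename_app r

lemma restrictToAxis_eq_zero_iff {i j : Fin 2} (hij : i ≠ j) (f : MvPowerSeries (Fin 2) R) :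
    restrictToAxis i f = 0 ↔ X j ∣ f := by
  have hsupp : ∀ m : Fin 2 →₀ ℕ, m j = 0 → m = Finsupp.single i (m i) := by
    intro m hm
    ext k
    fin_cases i <;> fin_cases j <;> fin_cases k <;> simp_all
  rw [X_dvd_iff, PowerSeries.ext_iff]
  simp only [coeff_restrictToAxis, map_zero]
  refine ⟨fun h m hm => hsupp m hm ▸ h (m i), fun h n => h _ ?_⟩
  simp [hij]

lemma mem_span_X_mul_X_iff (f : MvPowerSeries (Fin 2) R) :
    f ∈ Ideal.span {X 0 * X 1} ↔ restrictToAxis 0 f = 0 ∧ restrictToAxis 1 f = 0 := by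
  constructor
  · intro h
    obtain ⟨g, rfl⟩ := Ideal.mem_span_singleton.mp h
    simp [restrictToAxis_X_of_ne]
  · rintro ⟨h0, h1⟩
    obtain ⟨g, rfl⟩ := (restrictToAxis_eq_zero_iff zero_ne_one f).mp h0
    rw [map_mul, restrictToAxis_X_self, ← mul_zero PowerSeries.X, PowerSeries.X_mul_inj,
      restrictToAxis_eq_zero_iff one_ne_zero] at h1
    obtain ⟨h, rfl⟩ := h1
    exact Ideal.mem_span_singleton.mpr ⟨h, by ring⟩

lemma ker_restrictToAxis_prod :
    RingHom.ker ((restrictToAxis 0).prod (restrictToAxis 1) :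
      MvPowerSeries (Fin 2) R →ₐ[R] PowerSeries R × PowerSeries R) =
      Ideal.span {X 0 * X 1} := by
  ext f
  rw [RingHom.mem_ker, mem_span_X_mul_X_iff, Prod.ext_iff]
  rfl

end MvPowerSeries

lemma IsIdempotentElem.isIntegral {R A : Type*} [CommRing R] [Ring A] [Algebra R A] {e : A}
    (he : IsIdempotentElem e) : IsIntegral R e :=
  ⟨Polynomial.X ^ 2 - Polynomial.X,
    Polynomial.monic_X_pow_sub (Polynomial.degree_X_le.trans_lt (by norm_num)),
    by simp [sq, he.eq]⟩

lemma LaurentSeries.exists_mul_X_pow_eq {K : Type*} [Field K] (u : LaurentSeries K) :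
    ∃ (n : ℕ) (p : PowerSeries K),
      u * algebraMap (PowerSeries K) _ (PowerSeries.X ^ n) = algebraMap (PowerSeries K) _ p := by
  obtain ⟨⟨p, s, n, rfl⟩, h⟩ :=
    IsLocalization.surj (Submonoid.powers (PowerSeries.X : PowerSeries K)) u
  exact ⟨n, p, h⟩

section NodeBranches

open Function PowerSeries
open MvPowerSeries (restrictToAxis restrictToAxis_X_of_ne coeff_restrictToAxis
  restrictToAxis_rename)

noncomputable def nodeBranches : nodeRing →ₐ[ℂ] ℂ⟦X⟧ × ℂ⟦X⟧ :=
  Ideal.Quotient.liftₐ _ ((restrictToAxis 0).prod (restrictToAxis 1)) fun f hf => by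
    rwa [← MvPowerSeries.ker_restrictToAxis_prod, RingHom.mem_ker] at hf

lemma nodeBranches_mk (f : MvPowerSeries (Fin 2) ℂ) :
    nodeBranches (Ideal.Quotient.mk _ f) = (restrictToAxis 0 f, restrictToAxis 1 f) :=
  rfl

lemma nodeBranches_injective : Injective nodeBranches :=
  (Ideal.injective_lift_iff _).mpr MvPowerSeries.ker_restrictToAxis_prod

@[simp]
lemma nodeBranches_xbar : nodeBranches xbar = (X, 0) := by
  simp [xbar, nodeBranches_mk, restrictToAxis_X_of_ne]

@[simp]
lemma nodeBranches_ybar : nodeBranches ybar = (0, X) := by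
  simp [ybar, nodeBranches_mk, restrictToAxis_X_of_ne]

lemma constantCoeff_nodeBranches_fst_eq_snd (c : nodeRing) :
    constantCoeff (nodeBranches c).1 = constantCoeff (nodeBranches c).2 := by
  obtain ⟨f, rfl⟩ := Ideal.Quotient.mk_surjective c
  simp only [nodeBranches_mk, ← coeff_zero_eq_constantCoeff_apply, coeff_restrictToAxis,
    Finsupp.single_zero]

lemma exists_nodeBranches_eq {p q : ℂ⟦X⟧} (h : constantCoeff p = constantCoeff q) :
    ∃ c : nodeRing, nodeBranches c = (p, q) := by
  obtain ⟨p', hp'⟩ := X_dvd_iff.mpr (show constantCoeff (p - C (constantCoeff p)) = 0 by simp)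
  obtain ⟨q', hq'⟩ := X_dvd_iff.mpr
    (show constantCoeff (q - C (constantCoeff p)) = 0 by simp [h])
  let lift (i : Fin 2) (r : ℂ⟦X⟧) : nodeRing :=
    Ideal.Quotient.mk _ (MvPowerSeries.rename (Embedding.punit i) r)
  refine ⟨algebraMap ℂ nodeRing (constantCoeff p) + xbar * lift 0 p' + ybar * lift 1 q', ?_⟩
  have h0 : (nodeBranches (lift 0 p')).1 = p' := restrictToAxis_rename 0 p'
  have h1 : (nodeBranches (lift 1 q')).2 = q' := restrictToAxis_rename 1 q'
  refine Prod.ext ?_ ?_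
  · simp only [map_add, map_mul, AlgHom.commutes, Prod.algebraMap_apply, algebraMap_eq,
      nodeBranches_xbar, nodeBranches_ybar, Prod.fst_add, Prod.fst_mul, h0, zero_mul, add_zero]
    linear_combination -hp'
  · simp only [map_add, map_mul, AlgHom.commutes, Prod.algebraMap_apply, algebraMap_eq,
      nodeBranches_xbar, nodeBranches_ybar, Prod.snd_add, Prod.snd_mul, h1, zero_mul, add_zero]
    linear_combination -hq'

end NodeBranches

section BarletModule

open PowerSeries
open MvPowerSeries (restrictToAxis_eq_zero_iff)

lemma mem_span_ybar_iff (a : nodeRing) : a ∈ Ideal.span {ybar} ↔ (nodeBranches a).1 = 0 := by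
  refine ⟨fun h => ?_, fun h => ?_⟩
  · obtain ⟨c, rfl⟩ := Ideal.mem_span_singleton.mp h
    simp
  · obtain ⟨f, rfl⟩ := Ideal.Quotient.mk_surjective a
    obtain ⟨g, rfl⟩ := (restrictToAxis_eq_zero_iff zero_ne_one f).mp h
    exact Ideal.mem_span_singleton.mpr ⟨Ideal.Quotient.mk _ g, map_mul _ _ _⟩

lemma mem_span_xbar_iff (b : nodeRing) : b ∈ Ideal.span {xbar} ↔ (nodeBranches b).2 = 0 := by
  refine ⟨fun h => ?_, fun h => ?_⟩
  · obtain ⟨c, rfl⟩ := Ideal.mem_span_singleton.mp h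
    simp
  · obtain ⟨f, rfl⟩ := Ideal.Quotient.mk_surjective b
    obtain ⟨g, rfl⟩ := (restrictToAxis_eq_zero_iff one_ne_zero f).mp h
    exact Ideal.mem_span_singleton.mpr ⟨Ideal.Quotient.mk _ g, map_mul _ _ _⟩

lemma mem_nodeBarletModule_iff (a b : nodeRing) :
    (a, b) ∈ nodeBarletModule ↔ (nodeBranches a).1 = 0 ∧ (nodeBranches b).2 = 0 := by
  change xbar * a - ybar * b = 0 ↔ _
  rw [sub_eq_zero, ← nodeBranches_injective.eq_iff]
  simp [Prod.ext_iff, X_ne_zero, eq_comm (a := (0 : ℂ⟦X⟧))]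

theorem nodeBarletModule_eq_prod :
    nodeBarletModule = Submodule.prod (Ideal.span {ybar}) (Ideal.span {xbar}) := by
  ext ⟨a, b⟩
  rw [mem_nodeBarletModule_iff, Submodule.mem_prod, mem_span_ybar_iff, mem_span_xbar_iff]

end BarletModule

section TotalFractionRing

open Function PowerSeries
open scoped nonZeroDivisors

abbrev nodeFractionRing : Type := LaurentSeries ℂ × LaurentSeries ℂ

noncomputable instance : Algebra nodeRing nodeFractionRing :=
  ((RingHom.prodMap (algebraMap ℂ⟦X⟧ (LaurentSeries ℂ)) (algebraMap ℂ⟦X⟧ (LaurentSeries ℂ))).comp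
    nodeBranches.toRingHom).toAlgebra

lemma algebraMap_nodeFractionRing_apply (c : nodeRing) :
    algebraMap nodeRing nodeFractionRing c =
      (algebraMap ℂ⟦X⟧ (LaurentSeries ℂ) (nodeBranches c).1,
        algebraMap ℂ⟦X⟧ (LaurentSeries ℂ) (nodeBranches c).2) :=
  rfl

lemma mem_nonZeroDivisors_nodeRing_iff (s : nodeRing) :
    s ∈ nodeRing⁰ ↔ (nodeBranches s).1 ≠ 0 ∧ (nodeBranches s).2 ≠ 0 := by
  refine ⟨fun hs => ⟨fun h => ?_, fun h => ?_⟩, fun ⟨h1, h2⟩ => ?_⟩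
  · have : xbar * s = 0 := nodeBranches_injective (by simp [Prod.ext_iff, h])
    simpa using congrArg (·.1) (congrArg nodeBranches (mem_nonZeroDivisors_iff_right.mp hs _ this))
  · have : ybar * s = 0 := nodeBranches_injective (by simp [Prod.ext_iff, h])
    simpa using congrArg (·.2) (congrArg nodeBranches (mem_nonZeroDivisors_iff_right.mp hs _ this))
  · refine mem_nonZeroDivisors_iff_right.mpr fun x hx => nodeBranches_injective ?_
    have hx' := congrArg nodeBranches hx
    simp only [map_mul, map_zero, Prod.ext_iff, Prod.fst_mul, Prod.snd_mul, Prod.fst_zero,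
      Prod.snd_zero, mul_eq_zero] at hx' ⊢
    tauto

lemma nodeBranches_xbar_add_ybar : nodeBranches (xbar + ybar) = (X, X) := by
  simp

lemma algebraMap_nodeFractionRing_injective :
    Injective (algebraMap nodeRing nodeFractionRing) :=
  (Prod.map_injective.mpr ⟨IsFractionRing.injective ℂ⟦X⟧ (LaurentSeries ℂ),
    IsFractionRing.injective ℂ⟦X⟧ (LaurentSeries ℂ)⟩).comp nodeBranches_injective

instance : IsFractionRing nodeRing nodeFractionRing where
  map_units := by
    rintro ⟨s, hs⟩
    obtain ⟨h1, h2⟩ := (mem_nonZeroDivisors_nodeRing_iff s).mp hs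
    have hinj := IsFractionRing.injective ℂ⟦X⟧ (LaurentSeries ℂ)
    rw [algebraMap_nodeFractionRing_apply, Prod.isUnit_iff]
    exact ⟨isUnit_iff_ne_zero.mpr ((map_ne_zero_iff _ hinj).mpr h1),
      isUnit_iff_ne_zero.mpr ((map_ne_zero_iff _ hinj).mpr h2)⟩
  surj := by
    rintro ⟨u, v⟩
    obtain ⟨m, p, hp⟩ := LaurentSeries.exists_mul_X_pow_eq u
    obtain ⟨n, q, hq⟩ := LaurentSeries.exists_mul_X_pow_eq v
    obtain ⟨c, hc⟩ := exists_nodeBranches_eq (p := X ^ (n + 1) * p) (q := X ^ (m + 1) * q)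
      (by simp)
    -- clear both denominators with a power of `x̄ + ȳ ↦ (t, t)`
    refine ⟨⟨c, (xbar + ybar) ^ (m + n + 1), ?_⟩, ?_⟩
    · simp [mem_nonZeroDivisors_nodeRing_iff, nodeBranches_xbar_add_ybar, X_ne_zero]
    · simp only [algebraMap_nodeFractionRing_apply, map_pow, nodeBranches_xbar_add_ybar, hc,
        Prod.pow_mk, Prod.mk_mul_mk, Prod.mk.injEq]
      constructor
      · rw [← map_pow, add_assoc, pow_add, map_mul, ← mul_assoc, hp, ← map_mul, mul_comm]
      · rw [← map_pow, show m + n + 1 = n + (m + 1) by ring, pow_add, map_mul, ← mul_assoc, hq,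
          ← map_mul, mul_comm]
  exists_of_eq h := ⟨1, by rw [algebraMap_nodeFractionRing_injective h]⟩

lemma isIntegral_nodeFractionRing_iff (z : nodeFractionRing) :
    IsIntegral nodeRing z ↔
      ∃ p q : ℂ⟦X⟧, z = (algebraMap ℂ⟦X⟧ _ p, algebraMap ℂ⟦X⟧ _ q) := by
  constructor
  · intro hz
    have h1 : IsIntegral ℂ⟦X⟧ z.1 :=
      hz.map_of_comp_eq ((RingHom.fst _ _).comp nodeBranches.toRingHom) (RingHom.fst _ _) rfl
    have h2 : IsIntegral ℂ⟦X⟧ z.2 :=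
      hz.map_of_comp_eq ((RingHom.snd _ _).comp nodeBranches.toRingHom) (RingHom.snd _ _) rfl
    obtain ⟨p, hp⟩ := IsIntegrallyClosed.isIntegral_iff.mp h1
    obtain ⟨q, hq⟩ := IsIntegrallyClosed.isIntegral_iff.mp h2
    exact ⟨p, q, by rw [hp, hq]⟩
  · rintro ⟨p, q, rfl⟩
    -- `Õ` is generated over `O` by the idempotent `(1, 0)` separating the two branches.
    obtain ⟨c, hc⟩ := exists_nodeBranches_eq (p := p) (q := C (constantCoeff p)) (by simp)
    obtain ⟨d, hd⟩ := exists_nodeBranches_eq (p := C (constantCoeff q)) (q := q) (by simp)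
    have he : IsIdempotentElem ((1, 0) : nodeFractionRing) := by simp [IsIdempotentElem]
    have hsplit : ((algebraMap ℂ⟦X⟧ _ p, algebraMap ℂ⟦X⟧ _ q) : nodeFractionRing) =
        (1, 0) * algebraMap nodeRing _ c + (1 - (1, 0)) * algebraMap nodeRing _ d := by
      simp only [algebraMap_nodeFractionRing_apply, hc, hd]
      ext <;> simp
    rw [hsplit]
    exact (he.isIntegral.mul isIntegral_algebraMap).add
      (he.one_sub.isIntegral.mul isIntegral_algebraMap)

end TotalFractionRing

section Normalization

open Function PowerSeries
open scoped nonZeroDivisors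

lemma exists_nodeBranches_of_mem_nodeBarletModule {a b : nodeRing}
    (h : (a, b) ∈ nodeBarletModule) :
    ∃ p q : ℂ⟦X⟧, nodeBranches a = (0, X * q) ∧ nodeBranches b = (X * p, 0) := by
  obtain ⟨ha, hb⟩ := (mem_nodeBarletModule_iff a b).mp h
  obtain ⟨p, hp⟩ := X_dvd_iff.mpr (by rw [constantCoeff_nodeBranches_fst_eq_snd, hb, map_zero])
  obtain ⟨q, hq⟩ := X_dvd_iff.mpr (by rw [← constantCoeff_nodeBranches_fst_eq_snd, ha, map_zero])
  exact ⟨p, q, Prod.ext ha hq, Prod.ext hp hb⟩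

noncomputable def nodeBarletToFractions : nodeBarletModule →ₗ[nodeRing] nodeFractionRing :=
  LinearMap.mulRight nodeRing (algebraMap nodeRing nodeFractionRing (xbar + ybar))⁻¹ ∘ₗ
    Algebra.linearMap nodeRing nodeFractionRing ∘ₗ
    (LinearMap.fst nodeRing nodeRing nodeRing + LinearMap.snd nodeRing nodeRing nodeRing) ∘ₗ
    nodeBarletModule.subtype

lemma nodeBarletToFractions_apply {m : nodeBarletModule} {p q : ℂ⟦X⟧}
    (ha : nodeBranches m.1.1 = (0, X * q)) (hb : nodeBranches m.1.2 = (X * p, 0)) :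
    nodeBarletToFractions m = (algebraMap ℂ⟦X⟧ _ p, algebraMap ℂ⟦X⟧ _ q) := by
  have hX : algebraMap ℂ⟦X⟧ (LaurentSeries ℂ) X ≠ 0 :=
    (map_ne_zero_iff _ (IsFractionRing.injective _ _)).mpr X_ne_zero
  change algebraMap nodeRing nodeFractionRing (m.1.1 + m.1.2) *
    (algebraMap nodeRing nodeFractionRing (xbar + ybar))⁻¹ = _
  rw [algebraMap_nodeFractionRing_apply, algebraMap_nodeFractionRing_apply, map_add, ha, hb,
    nodeBranches_xbar_add_ybar]
  simp only [Prod.mk_add_mk, zero_add, add_zero, Prod.inv_mk, Prod.mk_mul_mk, map_mul,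
    mul_comm (algebraMap ℂ⟦X⟧ (LaurentSeries ℂ) X), mul_inv_cancel_right₀ hX]

lemma nodeBarletToFractions_mem_integralClosure (m : nodeBarletModule) :
    nodeBarletToFractions m ∈ integralClosure nodeRing nodeFractionRing := by
  obtain ⟨p, q, ha, hb⟩ := exists_nodeBranches_of_mem_nodeBarletModule m.2
  exact (isIntegral_nodeFractionRing_iff _).mpr ⟨p, q, nodeBarletToFractions_apply ha hb⟩

lemma nodeBarletToFractions_injective : Injective nodeBarletToFractions := by
  refine (injective_iff_map_eq_zero _).mpr fun m hm => ?_
  obtain ⟨p, q, ha, hb⟩ := exists_nodeBranches_of_mem_nodeBarletModule m.2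
  have hinj := IsFractionRing.injective ℂ⟦X⟧ (LaurentSeries ℂ)
  rw [nodeBarletToFractions_apply ha hb, Prod.mk_eq_zero, map_eq_zero_iff _ hinj,
    map_eq_zero_iff _ hinj] at hm
  rw [hm.1, mul_zero] at hb
  rw [hm.2, mul_zero] at ha
  exact Subtype.ext (Prod.ext (nodeBranches_injective (ha.trans (map_zero _).symm))
    (nodeBranches_injective (hb.trans (map_zero _).symm)))

lemma integralClosure_le_range_nodeBarletToFractions :
    (integralClosure nodeRing nodeFractionRing).toSubmodule ≤
      LinearMap.range nodeBarletToFractions := by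
  intro z hz
  obtain ⟨p, q, rfl⟩ := (isIntegral_nodeFractionRing_iff z).mp hz
  obtain ⟨a, ha⟩ := exists_nodeBranches_eq (p := 0) (q := X * q) (by simp)
  obtain ⟨b, hb⟩ := exists_nodeBranches_eq (p := X * p) (q := 0) (by simp)
  have hm : (a, b) ∈ nodeBarletModule := (mem_nodeBarletModule_iff a b).mpr (by simp [ha, hb])
  exact ⟨⟨(a, b), hm⟩, nodeBarletToFractions_apply ha hb⟩

theorem nonempty_nodeBarletModule_linearEquiv_integralClosure (K : Type) [CommRing K]
    [Algebra nodeRing K] [IsFractionRing nodeRing K] :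
    Nonempty (nodeBarletModule ≃ₗ[nodeRing] integralClosure nodeRing K) := by
  let toNormalization :=
    nodeBarletToFractions.codRestrict (integralClosure nodeRing nodeFractionRing).toSubmodule
    nodeBarletToFractions_mem_integralClosure
  have hbij : Bijective toNormalization :=
    ⟨fun m m' h => nodeBarletToFractions_injective (congrArg Subtype.val h), fun ⟨z, hz⟩ =>
      let ⟨m, hm⟩ := integralClosure_le_range_nodeBarletToFractions hz
      ⟨m, Subtype.ext hm⟩⟩
  exact ⟨(LinearEquiv.ofBijective toNormalization hbij).trans
    (IsLocalization.algEquiv nodeRing⁰ nodeFractionRing K).mapIntegralClosure.toLinearEquiv⟩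

end Normalization

section Delta

open Function PowerSeries

noncomputable def branchCoeffDiff : nodeRing × nodeRing →ₗ[ℂ] ℂ :=
  coeff 1 ∘ₗ LinearMap.snd ℂ ℂ⟦X⟧ ℂ⟦X⟧ ∘ₗ nodeBranches.toLinearMap ∘ₗ
      LinearMap.fst ℂ nodeRing nodeRing -
    coeff 1 ∘ₗ LinearMap.fst ℂ ℂ⟦X⟧ ℂ⟦X⟧ ∘ₗ nodeBranches.toLinearMap ∘ₗ
      LinearMap.snd ℂ nodeRing nodeRing

lemma branchCoeffDiff_apply (a b : nodeRing) :
    branchCoeffDiff (a, b) = coeff 1 (nodeBranches a).2 - coeff 1 (nodeBranches b).1 :=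
  rfl

lemma branchCoeffDiff_nodeIota (c : nodeRing) : branchCoeffDiff (nodeIota c) = 0 := by
  change branchCoeffDiff (c * ybar, c * xbar) = 0
  simp [branchCoeffDiff_apply, coeff_succ_mul_X, constantCoeff_nodeBranches_fst_eq_snd]

lemma exists_nodeIota_eq {a b : nodeRing} (h : (a, b) ∈ nodeBarletModule)
    (h0 : branchCoeffDiff (a, b) = 0) : ∃ c, nodeIota c = (a, b) := by
  obtain ⟨p, q, ha, hb⟩ := exists_nodeBranches_of_mem_nodeBarletModule h
  rw [branchCoeffDiff_apply, ha, hb, coeff_succ_X_mul, coeff_succ_X_mul, sub_eq_zero] at h0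
  obtain ⟨c, hc⟩ := exists_nodeBranches_eq (p := p) (q := q) (by simpa using h0.symm)
  refine ⟨c, Prod.ext (nodeBranches_injective ?_) (nodeBranches_injective ?_)⟩
  · change nodeBranches (c * ybar) = _
    simp [ha, hc, mul_comm]
  · change nodeBranches (c * xbar) = _
    simp [hb, hc, mul_comm]

theorem finrank_nodeBarletModule_quotient_range_nodeIota :
    Module.finrank ℂ
      (nodeBarletModule.restrictScalars ℂ ⧸
        (LinearMap.range nodeIota).comap (nodeBarletModule.restrictScalars ℂ).subtype) = 1 := by
  let Λ := branchCoeffDiff ∘ₗ (nodeBarletModule.restrictScalars ℂ).subtype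
  have hker : LinearMap.ker Λ =
      (LinearMap.range nodeIota).comap (nodeBarletModule.restrictScalars ℂ).subtype := by
    ext m
    refine ⟨fun h => exists_nodeIota_eq m.2 h, fun ⟨c, hc⟩ => ?_⟩
    change branchCoeffDiff ((nodeBarletModule.restrictScalars ℂ).subtype m) = 0
    rw [← hc, branchCoeffDiff_nodeIota]
  have hsurj : Surjective Λ := by
    have hy : (ybar, 0) ∈ nodeBarletModule := (mem_nodeBarletModule_iff _ _).mpr (by simp)
    have h1 : Λ ⟨(ybar, 0), hy⟩ = 1 := by simp [Λ, branchCoeffDiff_apply]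
    exact fun r => ⟨r • ⟨(ybar, 0), hy⟩, by rw [map_smul, h1, smul_eq_mul, mul_one]⟩
  rw [← hker, (Λ.quotKerEquivOfSurjective hsurj).finrank_eq, Module.finrank_self]

end Delta

theorem barlet_module_of_node
    (K : Type) [CommRing K] [Algebra nodeRing K] [IsFractionRing nodeRing K] :
    nodeBarletModule =
        Submodule.prod (Ideal.span {ybar}) (Ideal.span {xbar}) ∧
    Nonempty (↥nodeBarletModule ≃ₗ[nodeRing] ↥(integralClosure nodeRing K)) ∧
    Module.finrank ℂ
      (↥(Submodule.restrictScalars ℂ nodeBarletModule) ⧸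
        Submodule.comap (Submodule.restrictScalars ℂ nodeBarletModule).subtype
          (LinearMap.range nodeIota)) = 1 :=
  ⟨nodeBarletModule_eq_prod, nonempty_nodeBarletModule_linearEquiv_integralClosure K,
    finrank_nodeBarletModule_quotient_range_nodeIota⟩
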